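/- Let F be a hereditary family of graphs with the strong Erdős–Hajnal property with constant c, and let t be a positive integer. Then every graph G∈F on n ≥ c^{-t} vertices contains 2^t pairwise disjoint vertex subsets, each of size at least c^t n, such that between every pair of these subsets the bipartite graph is complete or empty. -/

import Mathlib

/-- A family of finite simple graphs, given as a predicate on graphs over every finite
vertex type. -/
abbrev GraphFamily : Type 1 := ∀ (V : Type) [Fintype V], SimpleGraph V → Prop

/-- A family of graphs is hereditary if it is closed under taking induced subgraphs. -/
def Hereditary (F : GraphFamily) : Prop :=
  ∀ (V : Type) [Fintype V] (G : SimpleGraph V), F V G →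
    ∀ (s : Set V) [Fintype ↥s], F ↥s (G.induce s)

/-- The bipartite graph between `A` and `B` is complete or empty. -/
def HomogPair {V : Type} (G : SimpleGraph V) (A B : Finset V) : Prop :=
  (∀ a ∈ A, ∀ b ∈ B, G.Adj a b) ∨ (∀ a ∈ A, ∀ b ∈ B, ¬ G.Adj a b)

/-- The number of (ordered) adjacent pairs between `A` and `B`. -/
noncomputable def crossCount {V : Type} (G : SimpleGraph V) (A B : Finset V) : ℕ :=
  {p : V × V | p.1 ∈ A ∧ p.2 ∈ B ∧ G.Adj p.1 p.2}.ncard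

/-- The mighty Erdős–Hajnal property: there is `c > 0` such that for every graph in the family
and all disjoint vertex subsets `A, B` of equal size, there are `A' ⊆ A`, `B' ⊆ B` with
`|A'| ≥ c|A|`, `|B'| ≥ c|B|` that are complete or empty to each other. -/
def MightyEH (F : GraphFamily) : Prop :=
  ∃ c : ℝ, 0 < c ∧
    ∀ (V : Type) [Fintype V] (G : SimpleGraph V), F V G →
      ∀ A B : Finset V, Disjoint A B → A.card = B.card →
        ∃ A' ⊆ A, ∃ B' ⊆ B,
          c * A.card ≤ (A'.card : ℝ) ∧ c * B.card ≤ (B'.card : ℝ) ∧ HomogPair G A' B'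

/-- The homogeneous regularity property: for every `ε > 0` there is `K` such that every graph
in the family has an equipartition into `K` parts such that all but at most `ε K²` pairs of
distinct parts are complete or empty to each other. -/
def HomogReg (F : GraphFamily) : Prop :=
  ∀ ε : ℝ, 0 < ε → ∃ K : ℕ, 0 < K ∧
    ∀ (V : Type) [Fintype V] (G : SimpleGraph V), F V G →
      ∃ P : Fin K → Finset V,
        (∀ i j, i ≠ j → Disjoint (P i) (P j)) ∧
        (∀ v : V, ∃ i, v ∈ P i) ∧
        (∀ i j, (P i).card ≤ (P j).card + 1) ∧
        ({p : Fin K × Fin K | p.1 ≠ p.2 ∧ ¬ HomogPair G (P p.1) (P p.2)}.ncard : ℝ)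
          ≤ ε * K ^ 2

/-- The homogeneous density property: for every `ε > 0` there is `C = C(ε)` such that for every
graph in the family and disjoint equal-size subsets `A, B` with at least `ε|A||B|` edges between
them, there are `A' ⊆ A`, `B' ⊆ B` of sizes at least `ε^C |A|`, `ε^C |B|` that are complete to
each other. -/
def HomogDensity (F : GraphFamily) : Prop :=
  ∀ ε : ℝ, 0 < ε → ε ≤ 1 → ∃ C : ℝ, 0 < C ∧
    ∀ (V : Type) [Fintype V] (G : SimpleGraph V), F V G →
      ∀ A B : Finset V, Disjoint A B → A.card = B.card →
        ε * A.card * B.card ≤ (crossCount G A B : ℝ) →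
        ∃ A' ⊆ A, ∃ B' ⊆ B,
          ε ^ C * A.card ≤ (A'.card : ℝ) ∧ ε ^ C * B.card ≤ (B'.card : ℝ) ∧
          ∀ a ∈ A', ∀ b ∈ B', G.Adj a b

/-- The family of complements of graphs in `F`. -/
def ComplFamily (F : GraphFamily) : GraphFamily :=
  fun V inst G => @F V inst Gᶜ


/-! Apply the strong Erdős–Hajnal property once to get disjoint sets `A`, `B` of size at least
`c n`, complete or empty to each other, and recurse with `t - 1` inside `G[A]` and `G[B]`, which
stay in `F` by heredity. Since `n ≥ c⁻ᵗ`, every graph met at depth `< t` has at least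
`c⁻¹ ≥ 2` vertices, so the property applies at each level; a piece found inside `A` and one found
inside `B` are homogeneous to each other because `A` and `B` are. -/

open Function

section HomogPair

variable {V W : Type} {G : SimpleGraph V} {H : SimpleGraph W}

lemma HomogPair.symm {A B : Finset V} (h : HomogPair G A B) : HomogPair G B A :=
  h.imp (fun h b hb a ha => (h a ha b hb).symm) (fun h b hb a ha hab => h a ha b hb hab.symm)

lemma HomogPair.mono {A B A' B' : Finset V} (h : HomogPair G A B) (hA : A' ⊆ A) (hB : B' ⊆ B) :
    HomogPair G A' B' :=
  h.imp (fun h a ha b hb => h a (hA ha) b (hB hb)) (fun h a ha b hb => h a (hA ha) b (hB hb))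

lemma HomogPair.map (f : H ↪g G) {A B : Finset W} (h : HomogPair H A B) :
    HomogPair G (A.map f.toEmbedding) (B.map f.toEmbedding) := by
  simpa [HomogPair, f.map_adj_iff] using h

def DisjointHomogPair (G : SimpleGraph V) (A B : Finset V) : Prop :=
  Disjoint A B ∧ HomogPair G A B

lemma DisjointHomogPair.symm {A B : Finset V} (h : DisjointHomogPair G A B) :
    DisjointHomogPair G B A :=
  ⟨h.1.symm, h.2.symm⟩

lemma DisjointHomogPair.mono {A B A' B' : Finset V} (h : DisjointHomogPair G A B) (hA : A' ⊆ A)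
    (hB : B' ⊆ B) : DisjointHomogPair G A' B' :=
  ⟨h.1.mono hA hB, h.2.mono hA hB⟩

lemma DisjointHomogPair.map (f : H ↪g G) {A B : Finset W} (h : DisjointHomogPair H A B) :
    DisjointHomogPair G (A.map f.toEmbedding) (B.map f.toEmbedding) :=
  ⟨(Finset.disjoint_map _).2 h.1, h.2.map f⟩

end HomogPair

lemma Pairwise.fin_append {α : Type*} {r : α → α → Prop} {m n : ℕ} {u : Fin m → α}
    {v : Fin n → α} (hu : Pairwise (r on u)) (hv : Pairwise (r on v))
    (huv : ∀ i j, r (u i) (v j)) (hvu : ∀ i j, r (v j) (u i)) :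
    Pairwise (r on Fin.append u v) := by
  intro i j hij
  induction i using Fin.addCases <;> induction j using Fin.addCases <;>
    simp only [onFun, Fin.append_left, Fin.append_right] at hij ⊢
  · exact hu (by simpa using hij)
  · exact huv _ _
  · exact hvu _ _
  · exact hv (by simpa using hij)

def StrongEHWith (F : GraphFamily) (c : ℝ) : Prop :=
  ∀ (V : Type) [Fintype V] (G : SimpleGraph V), F V G → 2 ≤ Fintype.card V →
    ∃ A B : Finset V, Disjoint A B ∧
      c * Fintype.card V ≤ (A.card : ℝ) ∧ c * Fintype.card V ≤ (B.card : ℝ) ∧ HomogPair G A B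

lemma two_le_of_inv_pow_succ_le {c x : ℝ} (hc0 : 0 < c) (hc1 : c ≤ 1 / 2) (t : ℕ)
    (hx : (c ^ (t + 1))⁻¹ ≤ x) : 2 ≤ x := by
  have : c ^ (t + 1) ≤ 1 / 2 := (pow_le_of_le_one hc0.le (by linarith) t.succ_ne_zero).trans hc1
  calc (2 : ℝ) = (1 / 2)⁻¹ := by norm_num
    _ ≤ (c ^ (t + 1))⁻¹ := inv_anti₀ (by positivity) this
    _ ≤ x := hx

lemma inv_pow_le_mul_of_inv_pow_succ_le {c x : ℝ} (hc0 : 0 < c) (t : ℕ)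
    (hx : (c ^ (t + 1))⁻¹ ≤ x) : (c ^ t)⁻¹ ≤ c * x := by
  calc (c ^ t)⁻¹ = c * (c ^ (t + 1))⁻¹ := by field_simp; ring
    _ ≤ c * x := by gcongr

theorem exists_pairwise_disjointHomogPair {F : GraphFamily} {c : ℝ} (hF : Hereditary F)
    (hc0 : 0 < c) (hc1 : c ≤ 1 / 2) (hSEH : StrongEHWith F c) (t : ℕ) {V : Type} [Fintype V]
    {G : SimpleGraph V} (hG : F V G) (hn : (c ^ t)⁻¹ ≤ (Fintype.card V : ℝ)) :
    ∃ P : Fin (2 ^ t) → Finset V, Pairwise (DisjointHomogPair G on P) ∧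
      ∀ i, c ^ t * Fintype.card V ≤ ((P i).card : ℝ) := by
  induction t generalizing V with
  | zero =>
    exact ⟨fun _ => Finset.univ,
      fun i j hij => (hij (Subsingleton.elim (α := Fin 1) i j)).elim, by simp⟩
  | succ t ih =>
    obtain ⟨A, B, hAB, hA, hB, hhom⟩ :=
      hSEH V G hG (by exact_mod_cast two_le_of_inv_pow_succ_le hc0 hc1 t hn)
    have hABhom : DisjointHomogPair G A B := ⟨hAB, hhom⟩
    have family_inside : ∀ A : Finset V, c * Fintype.card V ≤ (A.card : ℝ) →
        ∃ P : Fin (2 ^ t) → Finset V, Pairwise (DisjointHomogPair G on P) ∧ (∀ i, P i ⊆ A) ∧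
          ∀ i, c ^ (t + 1) * Fintype.card V ≤ ((P i).card : ℝ) := by
      intro A hA
      obtain ⟨P, hP, hPcard⟩ := ih (hF V G hG A)
        (by simpa using (inv_pow_le_mul_of_inv_pow_succ_le hc0 t hn).trans hA)
      refine ⟨fun i => (P i).map (SimpleGraph.Embedding.induce (A : Set V)).toEmbedding,
        fun i j hij => (hP hij).map _,
        fun i => Finset.coe_subset.1 (Finset.map_subtype_subset (P i)), fun i => ?_⟩
      calc c ^ (t + 1) * Fintype.card V = c ^ t * (c * Fintype.card V) := by ring
        _ ≤ c ^ t * A.card := by gcongr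
        _ ≤ _ := by simpa using hPcard i
    obtain ⟨PA, hPA, hPAA, hPAcard⟩ := family_inside A hA
    obtain ⟨PB, hPB, hPBB, hPBcard⟩ := family_inside B hB
    refine ⟨Fin.append PA PB ∘ Fin.cast (Nat.two_pow_succ t), ?_, ?_⟩
    · refine (Pairwise.fin_append hPA hPB (fun i j => ?_) (fun i j => ?_)).comp_of_injective
        (Fin.cast_injective _)
      · exact hABhom.mono (hPAA i) (hPBB j)
      · exact (hABhom.mono (hPAA i) (hPBB j)).symm
    · intro i
      exact Fin.addCases
        (motive := fun k => c ^ (t + 1) * Fintype.card V ≤ ((Fin.append PA PB k).card : ℝ))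
        (fun j => by rw [Fin.append_left]; exact hPAcard j)
        (fun j => by rw [Fin.append_right]; exact hPBcard j) _

theorem stmt11_general (F : GraphFamily) (hF : Hereditary F) (c : ℝ) (hc0 : 0 < c) (hc1 : c ≤ 1 / 2)
    (hSEH : ∀ (V : Type) [Fintype V] (G : SimpleGraph V), F V G → 2 ≤ Fintype.card V →
      ∃ A B : Finset V, Disjoint A B ∧
        c * Fintype.card V ≤ (A.card : ℝ) ∧ c * Fintype.card V ≤ (B.card : ℝ) ∧
        HomogPair G A B)
    (t : ℕ)
    (V : Type) [Fintype V] (G : SimpleGraph V) (hG : F V G)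
    (hn : (c ^ t)⁻¹ ≤ (Fintype.card V : ℝ)) :
    ∃ P : Fin (2 ^ t) → Finset V,
      (∀ i j, i ≠ j → Disjoint (P i) (P j)) ∧
      (∀ i, c ^ t * Fintype.card V ≤ ((P i).card : ℝ)) ∧
      (∀ i j, i ≠ j → HomogPair G (P i) (P j)) := by
  obtain ⟨P, hP, hcard⟩ := exists_pairwise_disjointHomogPair hF hc0 hc1 hSEH t hG hn
  exact ⟨P, fun i j hij => (hP hij).1, hcard, fun i j hij => (hP hij).2⟩

/-- Iterated strong Erdős–Hajnal: if a hereditary family `F` has the strong Erdős–Hajnal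
property with constant `c`, and `G ∈ F` has `n ≥ c^{-t}` vertices, then `G` contains `2^t`
pairwise disjoint vertex subsets, each of size at least `c^t n`, such that between every pair
of these subsets the bipartite graph is complete or empty. -/
theorem stmt11 (F : GraphFamily) (hF : Hereditary F) (c : ℝ) (hc0 : 0 < c) (hc1 : c ≤ 1 / 2)
    (hSEH : ∀ (V : Type) [Fintype V] (G : SimpleGraph V), F V G → 2 ≤ Fintype.card V →
      ∃ A B : Finset V, Disjoint A B ∧
        c * Fintype.card V ≤ (A.card : ℝ) ∧ c * Fintype.card V ≤ (B.card : ℝ) ∧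
        HomogPair G A B)
    (t : ℕ) (ht : 0 < t)
    (V : Type) [Fintype V] (G : SimpleGraph V) (hG : F V G)
    (hn : (c ^ t)⁻¹ ≤ (Fintype.card V : ℝ)) :
    ∃ P : Fin (2 ^ t) → Finset V,
      (∀ i j, i ≠ j → Disjoint (P i) (P j)) ∧
      (∀ i, c ^ t * Fintype.card V ≤ ((P i).card : ℝ)) ∧
      (∀ i j, i ≠ j → HomogPair G (P i) (P j)) :=
  stmt11_general F hF c hc0 hc1 hSEH t V G hG hn
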